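/- Under the setup of Theorem 1, the squared signal-to-noise ratio SNR² = ‖g_1+g_2‖²/‖g_1−g_2‖² on the unit sphere equals (x² cos⁴ α + y² sin⁴ α − (x² cos² α + y² sin² α)²) / (sin² α cos² α (x² + y² − 4x²y²)), and in particular is independent of z. -/

import Mathlib

/-!
On the unit sphere the gradient of `w ↦ ½⟪a, w⟫² / ‖w‖²` is `p • a - p² • v` with `p = ⟪a, v⟫`.
Since `⟪p • a ± q • b, v⟫ = p² ± q²`, Pythagoras gives
`‖g₁ ± g₂‖² = ‖p • a ± q • b‖² - (p² ± q²)²`, which for `a = (cos α, sin α, 0)`,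
`b = (cos α, -sin α, 0)` depends only on `x = v 0` and `y = v 1`; numerator and denominator are
then `4` times the claimed ones, using `sin² α + cos² α = 1`.
-/

open Real

open scoped RealInnerProductSpace

section InnerProductSpace

variable {E : Type*} [NormedAddCommGroup E] [InnerProductSpace ℝ E]

theorem hasGradientAt_half_inner_sq_div_norm_sq [CompleteSpace E] (a : E) {v : E} (hv : v ≠ 0) :
    HasGradientAt (fun w => (1 / 2) * ⟪a, w⟫ ^ 2 / ‖w‖ ^ 2)
      ((⟪a, v⟫ / ‖v‖ ^ 2) • a - (⟪a, v⟫ ^ 2 / ‖v‖ ^ 4) • v) v := by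
  have hnorm : ‖v‖ ^ 2 ≠ 0 := by positivity
  have hnum : HasFDerivAt (fun w => (1 / 2 : ℝ) * ⟪a, w⟫ ^ 2)
      ((1 / 2 : ℝ) • ((2 * ⟪a, v⟫ ^ 1) • innerSL ℝ a)) v := by
    simpa using ((innerSL ℝ a).hasFDerivAt.pow 2).const_mul (1 / 2 : ℝ)
  have hinv := (hasDerivAt_inv hnorm).comp_hasFDerivAt v (hasFDerivAt_id v).norm_sq
  rw [hasGradientAt_iff_hasFDerivAt]
  refine ((hnum.mul hinv).congr_fderiv ?_).congr_of_eventuallyEq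
    (.of_forall fun w => div_eq_mul_inv _ _)
  ext w
  simp
  field_simp
  ring

theorem gradient_half_inner_sq_div_norm_sq_of_norm_eq_one [CompleteSpace E] (a : E) {v : E}
    (hv : ‖v‖ = 1) :
    gradient (fun w => (1 / 2) * ⟪a, w⟫ ^ 2 / ‖w‖ ^ 2) v = ⟪a, v⟫ • a - ⟪a, v⟫ ^ 2 • v := by
  rw [(hasGradientAt_half_inner_sq_div_norm_sq a (norm_ne_zero_iff.mp (by simp [hv]))).gradient,
    hv]
  simp

theorem norm_sub_smul_sq_of_inner_eq {u v : E} {r : ℝ} (hv : ‖v‖ = 1) (h : ⟪u, v⟫ = r) :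
    ‖u - r • v‖ ^ 2 = ‖u‖ ^ 2 - r ^ 2 := by
  rw [norm_sub_sq_real, inner_smul_right, norm_smul, h, hv, mul_one, Real.norm_eq_abs, sq_abs]
  ring

theorem norm_add_sq_inner_smul_sub {v : E} (hv : ‖v‖ = 1) (a b : E) :
    ‖(⟪a, v⟫ • a - ⟪a, v⟫ ^ 2 • v) + (⟪b, v⟫ • b - ⟪b, v⟫ ^ 2 • v)‖ ^ 2
      = ⟪a, v⟫ ^ 2 * ‖a‖ ^ 2 + 2 * ⟪a, v⟫ * ⟪b, v⟫ * ⟪a, b⟫ + ⟪b, v⟫ ^ 2 * ‖b‖ ^ 2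
        - (⟪a, v⟫ ^ 2 + ⟪b, v⟫ ^ 2) ^ 2 := by
  rw [show _ + _ = (⟪a, v⟫ • a + ⟪b, v⟫ • b) - (⟪a, v⟫ ^ 2 + ⟪b, v⟫ ^ 2) • v by module,
    norm_sub_smul_sq_of_inner_eq hv (by simp [inner_add_left, inner_smul_left]; ring),
    norm_add_sq_real, norm_smul, norm_smul, inner_smul_left, inner_smul_right]
  simp [mul_pow]
  ring

theorem norm_sub_sq_inner_smul_sub {v : E} (hv : ‖v‖ = 1) (a b : E) :
    ‖(⟪a, v⟫ • a - ⟪a, v⟫ ^ 2 • v) - (⟪b, v⟫ • b - ⟪b, v⟫ ^ 2 • v)‖ ^ 2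
      = ⟪a, v⟫ ^ 2 * ‖a‖ ^ 2 - 2 * ⟪a, v⟫ * ⟪b, v⟫ * ⟪a, b⟫ + ⟪b, v⟫ ^ 2 * ‖b‖ ^ 2
        - (⟪a, v⟫ ^ 2 - ⟪b, v⟫ ^ 2) ^ 2 := by
  rw [show _ - _ = (⟪a, v⟫ • a - ⟪b, v⟫ • b) - (⟪a, v⟫ ^ 2 - ⟪b, v⟫ ^ 2) • v by module,
    norm_sub_smul_sq_of_inner_eq hv (by simp [inner_sub_left, inner_smul_left]; ring),
    norm_sub_sq_real, norm_smul, norm_smul, inner_smul_left, inner_smul_right]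
  simp [mul_pow]
  ring

end InnerProductSpace

theorem EuclideanSpace.inner_fin_three (u w : EuclideanSpace ℝ (Fin 3)) :
    ⟪u, w⟫ = u 0 * w 0 + u 1 * w 1 + u 2 * w 2 := by
  simp [PiLp.inner_apply, Fin.sum_univ_three, mul_comm]

theorem EuclideanSpace.norm_sq_fin_three (w : EuclideanSpace ℝ (Fin 3)) :
    ‖w‖ ^ 2 = w 0 ^ 2 + w 1 ^ 2 + w 2 ^ 2 := by
  simp [EuclideanSpace.norm_sq_eq, Fin.sum_univ_three]

theorem snr_sq_ratio_identity {c s : ℝ} (h : s ^ 2 + c ^ 2 = 1) (x y : ℝ) :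
    ((x * c + y * s) ^ 2 + 2 * (x * c + y * s) * (x * c - y * s) * (c ^ 2 - s ^ 2)
        + (x * c - y * s) ^ 2 - ((x * c + y * s) ^ 2 + (x * c - y * s) ^ 2) ^ 2)
      / ((x * c + y * s) ^ 2 - 2 * (x * c + y * s) * (x * c - y * s) * (c ^ 2 - s ^ 2)
        + (x * c - y * s) ^ 2 - ((x * c + y * s) ^ 2 - (x * c - y * s) ^ 2) ^ 2)
      = (x ^ 2 * c ^ 4 + y ^ 2 * s ^ 4 - (x ^ 2 * c ^ 2 + y ^ 2 * s ^ 2) ^ 2)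
        / (s ^ 2 * c ^ 2 * (x ^ 2 + y ^ 2 - 4 * x ^ 2 * y ^ 2)) := by
  rw [← mul_div_mul_left _ (s ^ 2 * c ^ 2 * _) four_ne_zero]
  congr 1 <;> linear_combination (-2 * (x ^ 2 * c ^ 2 + y ^ 2 * s ^ 2)) * h

theorem snr_sq_formula_general (α : ℝ)
    (f₁ f₂ : EuclideanSpace ℝ (Fin 3) → ℝ)
    (hf₁ : ∀ v : EuclideanSpace ℝ (Fin 3),
      f₁ v = (1 / 2) * (v 0 * cos α + v 1 * sin α) ^ 2
        / ((v 0) ^ 2 + (v 1) ^ 2 + (v 2) ^ 2))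
    (hf₂ : ∀ v : EuclideanSpace ℝ (Fin 3),
      f₂ v = (1 / 2) * (v 0 * cos α - v 1 * sin α) ^ 2
        / ((v 0) ^ 2 + (v 1) ^ 2 + (v 2) ^ 2))
    (v : EuclideanSpace ℝ (Fin 3)) (hv : (v 0) ^ 2 + (v 1) ^ 2 + (v 2) ^ 2 = 1) :
    ‖gradient f₁ v + gradient f₂ v‖ ^ 2 / ‖gradient f₁ v - gradient f₂ v‖ ^ 2
      = ((v 0) ^ 2 * cos α ^ 4 + (v 1) ^ 2 * sin α ^ 4
          - ((v 0) ^ 2 * cos α ^ 2 + (v 1) ^ 2 * sin α ^ 2) ^ 2)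
        / (sin α ^ 2 * cos α ^ 2
          * ((v 0) ^ 2 + (v 1) ^ 2 - 4 * (v 0) ^ 2 * (v 1) ^ 2)) := by
  set a : EuclideanSpace ℝ (Fin 3) := !₂[cos α, sin α, 0]
  set b : EuclideanSpace ℝ (Fin 3) := !₂[cos α, -sin α, 0]
  have hv₁ : ‖v‖ = 1 := by
    rw [← pow_eq_one_iff_of_nonneg (norm_nonneg v) two_ne_zero,
      EuclideanSpace.norm_sq_fin_three, hv]
  have hf₁a : f₁ = fun w => (1 / 2) * ⟪a, w⟫ ^ 2 / ‖w‖ ^ 2 := by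
    ext w
    simp [hf₁, a, EuclideanSpace.inner_fin_three, EuclideanSpace.norm_sq_fin_three]
    ring_nf
  have hf₂b : f₂ = fun w => (1 / 2) * ⟪b, w⟫ ^ 2 / ‖w‖ ^ 2 := by
    ext w
    simp [hf₂, b, EuclideanSpace.inner_fin_three, EuclideanSpace.norm_sq_fin_three]
    ring_nf
  rw [hf₁a, hf₂b, gradient_half_inner_sq_div_norm_sq_of_norm_eq_one a hv₁,
    gradient_half_inner_sq_div_norm_sq_of_norm_eq_one b hv₁, norm_add_sq_inner_smul_sub hv₁ a b,
    norm_sub_sq_inner_smul_sub hv₁ a b]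
  have hp : ⟪a, v⟫ = v 0 * cos α + v 1 * sin α := by
    simp [a, EuclideanSpace.inner_fin_three]; ring
  have hq : ⟪b, v⟫ = v 0 * cos α - v 1 * sin α := by
    simp [b, EuclideanSpace.inner_fin_three]; ring
  have hab : ⟪a, b⟫ = cos α ^ 2 - sin α ^ 2 := by
    simp [a, b, EuclideanSpace.inner_fin_three]; ring
  have ha : ‖a‖ ^ 2 = 1 := by simp [a, EuclideanSpace.norm_sq_fin_three]
  have hb : ‖b‖ ^ 2 = 1 := by simp [b, EuclideanSpace.norm_sq_fin_three]
  rw [hp, hq, hab, ha, hb, mul_one, mul_one]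
  exact snr_sq_ratio_identity (sin_sq_add_cos_sq α) _ _

/-- The squared signal-to-noise ratio `SNR² = ‖g₁+g₂‖²/‖g₁−g₂‖²` on the unit
sphere equals
`(x² cos⁴ α + y² sin⁴ α − (x² cos² α + y² sin² α)²)/(sin² α cos² α (x² + y² − 4x²y²))`;
in particular it does not depend on `z`. -/
theorem snr_sq_formula (α : ℝ) (hα : 0 < α ∧ α < π / 4)
    (f₁ f₂ : EuclideanSpace ℝ (Fin 3) → ℝ)
    (hf₁ : ∀ v : EuclideanSpace ℝ (Fin 3),
      f₁ v = (1 / 2) * (v 0 * cos α + v 1 * sin α) ^ 2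
        / ((v 0) ^ 2 + (v 1) ^ 2 + (v 2) ^ 2))
    (hf₂ : ∀ v : EuclideanSpace ℝ (Fin 3),
      f₂ v = (1 / 2) * (v 0 * cos α - v 1 * sin α) ^ 2
        / ((v 0) ^ 2 + (v 1) ^ 2 + (v 2) ^ 2))
    (v : EuclideanSpace ℝ (Fin 3)) (hv : (v 0) ^ 2 + (v 1) ^ 2 + (v 2) ^ 2 = 1)
    (hden : sin α ^ 2 * cos α ^ 2
        * ((v 0) ^ 2 + (v 1) ^ 2 - 4 * (v 0) ^ 2 * (v 1) ^ 2) ≠ 0) :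
    ‖gradient f₁ v + gradient f₂ v‖ ^ 2 / ‖gradient f₁ v - gradient f₂ v‖ ^ 2
      = ((v 0) ^ 2 * cos α ^ 4 + (v 1) ^ 2 * sin α ^ 4
          - ((v 0) ^ 2 * cos α ^ 2 + (v 1) ^ 2 * sin α ^ 2) ^ 2)
        / (sin α ^ 2 * cos α ^ 2
          * ((v 0) ^ 2 + (v 1) ^ 2 - 4 * (v 0) ^ 2 * (v 1) ^ 2)) :=
  snr_sq_formula_general α f₁ f₂ hf₁ hf₂ v hv
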